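/- Fix predictor matrices X_{d,i} ∈ ℝ^{P_d×R} and responses y_i ∈ ℝ for i = 1,…,N, a density f : ℝ → ℝ with f > 0, and a penalty r(B) = λ Σ_{j,k} |B_{jk}| with λ ≥ 0. For b > 0 define the scaled data y_i' = b·y_i. Then for all B̃_d ∈ ℝ^{P_d×R}, α ∈ ℝ, σ > 0, the scale-penalized objective L_b(bα, bB̃_d, bσ) := −N ln(bσ) + Σ_{i=1}^{N} ln f((y_i' − bα − ⟨bB̃_d, X_{d,i}⟩)/(bσ)) − r(bB̃_d/(bσ)) satisfies L_b(bα, bB̃_d, bσ) = L_1(α, B̃_d, σ) − N ln b, where L_1(α, B̃_d, σ) = −N ln σ + Σ_{i=1}^{N} ln f((y_i − α − ⟨B̃_d, X_{d,i}⟩)/σ) − r(B̃_d/σ). Consequently, (α̂, B̂, σ̂) maximizes L_1 over ℝ × ℝ^{P_d×R} × (0,∞) if and only if (bα̂, bB̂, bσ̂) maximizes (α', B', σ') ↦ −N ln σ' + Σ_i ln f((y_i' − α' − ⟨B', X_{d,i}⟩)/σ') − r(B'/σ'); i.e., the estimates are invariant under scaling of the response. -/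

import Mathlib

/-!
Multiplying the response, the intercept, the coefficients and the scale by the same `b ≠ 0`
leaves both the standardized residuals `(yᵢ - α - ⟨B, Xᵢ⟩) / σ` and the penalized ratios
`B / σ` unchanged, so only the term `-N log σ` moves, by the constant `-N log b`. For `b > 0`
the map `p ↦ b • p` is a bijection of the parameter space `ℝ × ℝ^{P×R} × (0, ∞)`, so
maximizers correspond.
-/

open Set

theorem forall_le_iff_of_surjOn {ι : Type*} {S : Set ι} {F G : ι → ℝ} {e : ι → ι} {c : ℝ}
    (hmaps : MapsTo e S S) (hsurj : SurjOn e S S) (hFG : ∀ x ∈ S, F (e x) = G x - c)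
    {x₀ : ι} (hx₀ : x₀ ∈ S) :
    (∀ x ∈ S, G x ≤ G x₀) ↔ ∀ x ∈ S, F x ≤ F (e x₀) := by
  constructor
  · intro hmax x hx
    obtain ⟨x', hx', rfl⟩ := hsurj hx
    rw [hFG x' hx', hFG x₀ hx₀]
    linarith [hmax x' hx']
  · intro hmax x hx
    have := hmax (e x) (hmaps hx)
    rw [hFG x hx, hFG x₀ hx₀] at this
    linarith

section ScaleParameter

variable {β : Type*} [MulAction ℝ β] {b : ℝ}

theorem mapsTo_smul_setOf_scale_pos (hb : 0 < b) :
    MapsTo (b • ·) {p : ℝ × β × ℝ | 0 < p.2.2} {p | 0 < p.2.2} :=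
  fun _ hp => mul_pos hb hp

theorem surjOn_smul_setOf_scale_pos (hb : 0 < b) :
    SurjOn (b • ·) {p : ℝ × β × ℝ | 0 < p.2.2} {p | 0 < p.2.2} :=
  fun p hp => ⟨b⁻¹ • p, mul_pos (inv_pos.2 hb) hp, smul_inv_smul₀ hb.ne' p⟩

end ScaleParameter

noncomputable def l1ScaleObjective {Pd R N : ℕ} (X : Fin N → Matrix (Fin Pd) (Fin R) ℝ)
    (f : ℝ → ℝ) (lam : ℝ) (ys : Fin N → ℝ) (α : ℝ) (B : Matrix (Fin Pd) (Fin R) ℝ) (σ : ℝ) :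
    ℝ :=
  -(N : ℝ) * Real.log σ +
    ∑ i, Real.log (f ((ys i - α - ∑ j, ∑ k, B j k * X i j k) / σ)) -
    lam * ∑ j, ∑ k, |B j k / σ|

theorem l1ScaleObjective_smul {Pd R N : ℕ} (X : Fin N → Matrix (Fin Pd) (Fin R) ℝ)
    (f : ℝ → ℝ) (lam : ℝ) (ys : Fin N → ℝ) (α : ℝ) (B : Matrix (Fin Pd) (Fin R) ℝ)
    {b σ : ℝ} (hb : b ≠ 0) (hσ : σ ≠ 0) :
    l1ScaleObjective X f lam (fun i => b * ys i) (b * α) (b • B) (b * σ) =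
      l1ScaleObjective X f lam ys α B σ - N * Real.log b := by
  have hresidual : ∀ i, (b * ys i - b * α - ∑ j, ∑ k, (b • B) j k * X i j k) / (b * σ) =
      (ys i - α - ∑ j, ∑ k, B j k * X i j k) / σ := by
    intro i
    simp only [Matrix.smul_apply, smul_eq_mul, mul_assoc, ← Finset.mul_sum]
    rw [← mul_sub, ← mul_sub, mul_div_mul_left _ _ hb]
  have hratio : ∀ j k, (b • B) j k / (b * σ) = B j k / σ := fun j k =>
    mul_div_mul_left _ _ hb
  simp only [l1ScaleObjective, hresidual, hratio, Real.log_mul hb hσ]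
  ring

theorem statement_9_general {Pd R N : ℕ}
    (X : Fin N → Matrix (Fin Pd) (Fin R) ℝ) (y : Fin N → ℝ)
    (f : ℝ → ℝ)
    (lam : ℝ)
    (b : ℝ) (hb : 0 < b)
    -- the σ-scaled ℓ₁-penalized objective, for response vector `ys`
    (L : (Fin N → ℝ) → ℝ → Matrix (Fin Pd) (Fin R) ℝ → ℝ → ℝ)
    (hL : ∀ ys α B σ, L ys α B σ =
      -(N : ℝ) * Real.log σ +
        ∑ i, Real.log (f ((ys i - α - ∑ j, ∑ k, B j k * X i j k) / σ)) -
        lam * ∑ j, ∑ k, |B j k / σ|) :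
    -- (1) `L_b(bα, bB̃_d, bσ) = L_1(α, B̃_d, σ) − N ln b`
    (∀ (α : ℝ) (B : Matrix (Fin Pd) (Fin R) ℝ) (σ : ℝ), 0 < σ →
        L (fun i => b * y i) (b * α) (b • B) (b * σ)
          = L y α B σ - (N : ℝ) * Real.log b) ∧
    -- (2) the estimates are invariant under scaling of the response
    (∀ (αh : ℝ) (Bh : Matrix (Fin Pd) (Fin R) ℝ) (σh : ℝ), 0 < σh →
        ((∀ α B σ, 0 < σ → L y α B σ ≤ L y αh Bh σh) ↔
         (∀ α B σ, 0 < σ →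
            L (fun i => b * y i) α B σ ≤
              L (fun i => b * y i) (b * αh) (b • Bh) (b * σh)))) := by
  obtain rfl : L = l1ScaleObjective X f lam := by
    funext ys α B σ
    exact hL ys α B σ
  have hscale : ∀ α B σ, 0 < σ →
      l1ScaleObjective X f lam (fun i => b * y i) (b * α) (b • B) (b * σ) =
        l1ScaleObjective X f lam y α B σ - N * Real.log b :=
    fun α B σ hσ => l1ScaleObjective_smul X f lam y α B hb.ne' hσ.ne'
  refine ⟨hscale, fun αh Bh σh hσh => ?_⟩
  have key := forall_le_iff_of_surjOn
    (F := fun p => l1ScaleObjective X f lam (fun i => b * y i) p.1 p.2.1 p.2.2)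
    (G := fun p => l1ScaleObjective X f lam y p.1 p.2.1 p.2.2)
    (mapsTo_smul_setOf_scale_pos hb) (surjOn_smul_setOf_scale_pos hb)
    (fun p hp => hscale p.1 p.2.1 p.2.2 hp) (x₀ := (αh, Bh, σh)) hσh
  simpa only [Prod.forall, mem_ofPred_eq, Prod.smul_mk, smul_eq_mul] using key

theorem statement_9 {Pd R N : ℕ}
    (X : Fin N → Matrix (Fin Pd) (Fin R) ℝ) (y : Fin N → ℝ)
    (f : ℝ → ℝ) (hf : ∀ x, 0 < f x)
    (lam : ℝ) (hlam : 0 ≤ lam)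
    (b : ℝ) (hb : 0 < b)
    -- the σ-scaled ℓ₁-penalized objective, for response vector `ys`
    (L : (Fin N → ℝ) → ℝ → Matrix (Fin Pd) (Fin R) ℝ → ℝ → ℝ)
    (hL : ∀ ys α B σ, L ys α B σ =
      -(N : ℝ) * Real.log σ +
        ∑ i, Real.log (f ((ys i - α - ∑ j, ∑ k, B j k * X i j k) / σ)) -
        lam * ∑ j, ∑ k, |B j k / σ|) :
    -- (1) `L_b(bα, bB̃_d, bσ) = L_1(α, B̃_d, σ) − N ln b`
    (∀ (α : ℝ) (B : Matrix (Fin Pd) (Fin R) ℝ) (σ : ℝ), 0 < σ →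
        L (fun i => b * y i) (b * α) (b • B) (b * σ)
          = L y α B σ - (N : ℝ) * Real.log b) ∧
    -- (2) the estimates are invariant under scaling of the response
    (∀ (αh : ℝ) (Bh : Matrix (Fin Pd) (Fin R) ℝ) (σh : ℝ), 0 < σh →
        ((∀ α B σ, 0 < σ → L y α B σ ≤ L y αh Bh σh) ↔
         (∀ α B σ, 0 < σ →
            L (fun i => b * y i) α B σ ≤
              L (fun i => b * y i) (b * αh) (b • Bh) (b * σh)))) :=
  statement_9_general X y f lam b hb L hL
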